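/- arXiv:1903.10090 — 5 statements merged into one kernel-verified Lean document; each statement's English description precedes it below -/
import Mathlib

section
/- For D_i > 4 D_g ≥ 0 and λ > 0, with D(U) = D_i(1-4U+3U²)+D_g(4U-3U²), R(U) = λU(1-U), and β the larger root of D in (0,1), the strict inequality 2√(λ D_i) > 2√(D'(β) R(β)) holds, where D'(β) R(β) = 3λ(D_i - D_g)β(1-β)(β-α). -/
/-!
Since `Di² + 4Dg² - 5DiDg = (Di - Dg)(Di - 4Dg)`, the numbers `α, β` are the two roots of `D`,
so `D U = 3(Di - Dg)(U - α)(U - β)`. This gives `D'(β) = 3(Di - Dg)(β - α)` and `Di = D 0 = 3(Di - Dg)αβ`,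
and the inequality reduces, via `α + β = 4/3`, to `β(1 - β)(β - α) < αβ`, i.e. to
`6β² - 13β + 8 > 0`, a quadratic with negative discriminant.
-/

open Real

lemma quadratic_eq_mul_sub_mul_sub {Di Dg s : ℝ} (hd : Di - Dg ≠ 0)
    (hs : s ^ 2 = (Di - Dg) * (Di - 4 * Dg)) (U : ℝ) :
    Di * (1 - 4 * U + 3 * U ^ 2) + Dg * (4 * U - 3 * U ^ 2) =
      3 * (Di - Dg) * (U - (2 / 3 - s / (3 * (Di - Dg)))) *
        (U - (2 / 3 + s / (3 * (Di - Dg)))) := by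
  field_simp
  linear_combination hs

lemma hasDerivAt_const_mul_sub_mul_sub (c a b : ℝ) :
    HasDerivAt (fun U => c * (U - a) * (U - b)) (c * (b - a)) b :=
  ((((hasDerivAt_id b).sub_const a).const_mul c).mul
    ((hasDerivAt_id b).sub_const b)).congr_deriv (by simp)

lemma mul_one_sub_mul_sub_lt_mul {α β : ℝ} (hsum : α + β = 4 / 3) (hβ : 0 < β) :
    β * (1 - β) * (β - α) < α * β := by
  obtain rfl : α = 4 / 3 - β := by linarith
  nlinarith [sq_nonneg (12 * β - 13)]

theorem speed_threshold_ordering (lam Di Dg : ℝ) (hlam : 0 < lam)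
    (hDg : 0 ≤ Dg) (h : Di > 4 * Dg)
    (D R : ℝ → ℝ)
    (hD : ∀ U, D U = Di * (1 - 4 * U + 3 * U ^ 2) + Dg * (4 * U - 3 * U ^ 2))
    (hR : ∀ U, R U = lam * U * (1 - U))
    (α β : ℝ)
    (hα : α = 2 / 3 - Real.sqrt (Di ^ 2 + 4 * Dg ^ 2 - 5 * Di * Dg) / (3 * (Di - Dg)))
    (hβ : β = 2 / 3 + Real.sqrt (Di ^ 2 + 4 * Dg ^ 2 - 5 * Di * Dg) / (3 * (Di - Dg))) :
    deriv D β * R β = 3 * lam * (Di - Dg) * β * (1 - β) * (β - α) ∧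
    2 * Real.sqrt (lam * Di) > 2 * Real.sqrt (deriv D β * R β) := by
  have hd : 0 < Di - Dg := by linarith
  have hs : √(Di ^ 2 + 4 * Dg ^ 2 - 5 * Di * Dg) ^ 2 = (Di - Dg) * (Di - 4 * Dg) := by
    rw [sq_sqrt (by nlinarith)]; ring
  have hDfac : D = fun U => 3 * (Di - Dg) * (U - α) * (U - β) := by
    ext U; rw [hD, hα, hβ]; exact quadratic_eq_mul_sub_mul_sub hd.ne' hs U
  have hP : deriv D β * R β = 3 * lam * (Di - Dg) * β * (1 - β) * (β - α) := by
    rw [hDfac, (hasDerivAt_const_mul_sub_mul_sub _ α β).deriv, hR]; ring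
  refine ⟨hP, ?_⟩
  have hDi : Di = 3 * (Di - Dg) * α * β := by
    simpa [hDfac] using (hD 0).symm
  have hβpos : 0 < β := by rw [hβ]; positivity
  have hlt : β * (1 - β) * (β - α) < α * β :=
    mul_one_sub_mul_sub_lt_mul (by rw [hα, hβ]; ring) hβpos
  have hPlt : deriv D β * R β < lam * Di :=
    calc deriv D β * R β = 3 * lam * (Di - Dg) * (β * (1 - β) * (β - α)) := by rw [hP]; ring
      _ < 3 * lam * (Di - Dg) * (α * β) := by gcongr
      _ = lam * Di := by linear_combination -lam * hDi
  have hlamDi : 0 < lam * Di := mul_pos hlam (by linarith)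
  gcongr 2 * ?_
  exact (sqrt_lt_sqrt_iff_of_pos hlamDi).mpr hPlt
end

section
/- For D_i > 4D_g ≥ 0, the function u ↦ D(u)(1-u) with D(u) = D_i(1-4u+3u²)+D_g(4u-3u²) is strictly decreasing on [0, α], where α is the smaller root of D in (0,1); consequently sup_{u∈(0,α)} D(u)(1-u) = D(0) = D_i. -/
/-!
Writing `c = D_i - D_g > 0`, one has `3 D(u) = c (2 - 3u)² - (D_i - 4 D_g)`, so `D` is strictly
decreasing on `(-∞, 2/3]` and vanishes at `α ≤ 2/3`; hence `D ≥ 0` on `[0, α]`. The product of a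
nonnegative strictly decreasing function with the positive decreasing function `1 - u` is strictly
decreasing, and by continuity the supremum over `(0, α)` is the value at `0`.
-/

open Set

theorem StrictAntiOn.mul_antitoneOn {α M₀ : Type*} [Mul M₀] [Zero M₀] [Preorder M₀]
    [PosMulMono M₀] [MulPosStrictMono M₀] [Preorder α] {f g : α → M₀} {s : Set α}
    (hf : StrictAntiOn f s) (hg : AntitoneOn g s) (hf₀ : ∀ x ∈ s, 0 ≤ f x)
    (hg₀ : ∀ x ∈ s, 0 < g x) : StrictAntiOn (fun x => f x * g x) s :=
  fun _ hx _ hy hxy => mul_lt_mul (hf hx hy hxy) (hg hx hy hxy.le) (hg₀ _ hy) (hf₀ _ hx)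

theorem AntitoneOn.csSup_image_Ioo {α β : Type*} [TopologicalSpace α] [LinearOrder α]
    [OrderTopology α] [DenselyOrdered α] [ConditionallyCompleteLinearOrder β] [TopologicalSpace β]
    [OrderTopology β] {f : α → β} {a b : α} (hab : a < b) (hf : AntitoneOn f (Ico a b))
    (hfa : ContinuousWithinAt f (Ioo a b) a) : sSup (f '' Ioo a b) = f a := by
  refine (isLUB_of_mem_closure ?_ ?_).csSup_eq ((nonempty_Ioo.2 hab).image f)
  · rintro _ ⟨x, hx, rfl⟩
    exact hf (left_mem_Ico.2 hab) (Ioo_subset_Ico_self hx) hx.1.le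
  · exact hfa.mem_closure_image (by rw [closure_Ioo hab.ne]; exact left_mem_Icc.2 hab.le)

def diffusivity (Di Dg u : ℝ) : ℝ := Di * (1 - 4 * u + 3 * u ^ 2) + Dg * (4 * u - 3 * u ^ 2)

noncomputable def smallerRoot (Di Dg : ℝ) : ℝ :=
  2 / 3 - Real.sqrt (Di ^ 2 + 4 * Dg ^ 2 - 5 * Di * Dg) / (3 * (Di - Dg))

theorem smallerRoot_le {Di Dg : ℝ} (hc : Dg < Di) : smallerRoot Di Dg ≤ 2 / 3 := by
  unfold smallerRoot
  have : 0 ≤ Real.sqrt (Di ^ 2 + 4 * Dg ^ 2 - 5 * Di * Dg) / (3 * (Di - Dg)) :=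
    div_nonneg (Real.sqrt_nonneg _) (by linarith)
  linarith

namespace diffusivity

variable {Di Dg : ℝ}

theorem continuous : Continuous (diffusivity Di Dg) := by
  unfold diffusivity
  fun_prop

theorem apply_zero : diffusivity Di Dg 0 = Di := by
  simp [diffusivity]

theorem strictAntiOn (hc : Dg < Di) : StrictAntiOn (diffusivity Di Dg) (Iic (2 / 3)) := by
  intro u _ v hv huv
  have hdiff : diffusivity Di Dg u - diffusivity Di Dg v =
      (Di - Dg) * (v - u) * (4 - 3 * (u + v)) := by
    unfold diffusivity; ring
  have hpos : 0 < (Di - Dg) * (v - u) * (4 - 3 * (u + v)) :=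
    mul_pos (mul_pos (sub_pos.2 hc) (sub_pos.2 huv)) (by linarith [mem_Iic.1 hv])
  linarith

theorem apply_smallerRoot (hc : Dg < Di) (h : 4 * Dg ≤ Di) :
    diffusivity Di Dg (smallerRoot Di Dg) = 0 := by
  have hc' : Di - Dg ≠ 0 := (sub_pos.2 hc).ne'
  have hsq : Real.sqrt (Di ^ 2 + 4 * Dg ^ 2 - 5 * Di * Dg) ^ 2 = (Di - Dg) * (Di - 4 * Dg) := by
    rw [Real.sq_sqrt (by nlinarith)]; ring
  have hthree : 3 * diffusivity Di Dg (smallerRoot Di Dg) =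
      Real.sqrt (Di ^ 2 + 4 * Dg ^ 2 - 5 * Di * Dg) ^ 2 / (Di - Dg) - (Di - 4 * Dg) := by
    unfold diffusivity smallerRoot
    field_simp
    ring
  rw [hsq, mul_div_cancel_left₀ _ hc', sub_self] at hthree
  linarith

theorem smallerRoot_pos (hc : Dg < Di) (h : 4 * Dg ≤ Di) (hDi : 0 < Di) :
    0 < smallerRoot Di Dg := by
  by_contra! hle
  have := (strictAntiOn hc).antitoneOn (smallerRoot_le hc) (by norm_num : (0 : ℝ) ∈ Iic (2 / 3)) hle
  rw [apply_smallerRoot hc h, apply_zero] at this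
  linarith

theorem nonneg_of_le_smallerRoot (hc : Dg < Di) (h : 4 * Dg ≤ Di) {u : ℝ}
    (hu : u ≤ smallerRoot Di Dg) : 0 ≤ diffusivity Di Dg u :=
  apply_smallerRoot hc h ▸
    (strictAntiOn hc).antitoneOn (hu.trans (smallerRoot_le hc)) (smallerRoot_le hc) hu

end diffusivity

open diffusivity in
theorem D_times_one_sub_decreasing (Di Dg : ℝ) (hDg : 0 ≤ Dg) (h : Di > 4 * Dg)
    (D : ℝ → ℝ)
    (hD : ∀ u, D u = Di * (1 - 4 * u + 3 * u ^ 2) + Dg * (4 * u - 3 * u ^ 2))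
    (α : ℝ)
    (hα : α = 2 / 3 - Real.sqrt (Di ^ 2 + 4 * Dg ^ 2 - 5 * Di * Dg) / (3 * (Di - Dg))) :
    StrictAntiOn (fun u => D u * (1 - u)) (Set.Icc 0 α) ∧
    sSup ((fun u => D u * (1 - u)) '' Set.Ioo 0 α) = Di := by
  obtain rfl : D = diffusivity Di Dg := funext hD
  obtain rfl : α = smallerRoot Di Dg := hα
  have hc : Dg < Di := by linarith
  have hsub : Icc 0 (smallerRoot Di Dg) ⊆ Iic (2 / 3) := fun u hu => hu.2.trans (smallerRoot_le hc)
  have hanti : StrictAntiOn (fun u => diffusivity Di Dg u * (1 - u)) (Icc 0 (smallerRoot Di Dg)) :=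
    ((strictAntiOn hc).mono hsub).mul_antitoneOn (fun u _ v _ huv => by linarith)
      (fun u hu => nonneg_of_le_smallerRoot hc h.le hu.2)
      (fun u hu => by linarith [mem_Iic.1 (hsub hu)])
  refine ⟨hanti, ?_⟩
  rw [(hanti.antitoneOn.mono Ico_subset_Icc_self).csSup_image_Ioo
    (smallerRoot_pos hc h.le (by linarith))
    (continuous.mul (continuous_const.sub continuous_id)).continuousWithinAt, apply_zero, sub_zero,
    mul_one]
end

section
/- Let λ > 0, D_i > 4D_g ≥ 0, c ≥ 2√(λ D_i), and set μ₁ = -c/2. Then for all u ∈ (0, α), μ₁(μ₁ + c) ≤ -λ D(u)(1-u), where D(u) = D_i(1-4u+3u²)+D_g(4u-3u²) and α is the smaller root of D in (0,1). -/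
theorem invariant_region_slope_one (lam Di Dg c : ℝ) (hlam : 0 < lam)
    (hDg : 0 ≤ Dg) (h : Di > 4 * Dg) (hc : c ≥ 2 * Real.sqrt (lam * Di))
    (D : ℝ → ℝ)
    (hD : ∀ u, D u = Di * (1 - 4 * u + 3 * u ^ 2) + Dg * (4 * u - 3 * u ^ 2))
    (α : ℝ)
    (hα : α = 2 / 3 - Real.sqrt (Di ^ 2 + 4 * Dg ^ 2 - 5 * Di * Dg) / (3 * (Di - Dg)))
    (μ₁ : ℝ) (hμ : μ₁ = -c / 2) :
    ∀ u ∈ Set.Ioo 0 α, μ₁ * (μ₁ + c) ≤ -lam * D u * (1 - u) := by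
  intro u hu
  obtain ⟨hu0, huα⟩ := hu
  have hDiDg : 0 < Di - Dg := by linarith
  set s := Real.sqrt (Di ^ 2 + 4 * Dg ^ 2 - 5 * Di * Dg) with hs
  have hs0 : 0 ≤ s := Real.sqrt_nonneg _
  have hs2 : s ^ 2 = Di ^ 2 + 4 * Dg ^ 2 - 5 * Di * Dg := by
    rw [hs, Real.sq_sqrt]; nlinarith
  set t := s / (3 * (Di - Dg)) with ht
  have ht0 : 0 ≤ t := by positivity
  have ht2 : 9 * (Di - Dg) ^ 2 * t ^ 2 = Di ^ 2 + 4 * Dg ^ 2 - 5 * Di * Dg := by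
    rw [ht, div_pow, ← hs2]; field_simp; ring
  have huα' : u < 2 / 3 - t := by rw [hα] at huα; linarith
  -- D u ≥ 0
  have hDpos : 0 ≤ D u := by
    rw [hD]
    nlinarith [mul_pos (show (0:ℝ) < 2 / 3 - t - u by linarith)
      (show (0:ℝ) < 2 / 3 + t - u by linarith), hDiDg, ht2]
  -- D u ≤ Di
  have hDle : D u ≤ Di := by
    rw [hD]
    nlinarith [mul_pos hu0 (show (0:ℝ) < 4 - 3 * u by linarith), hDiDg]
  have hu1 : u < 1 := by linarith
  -- c^2 ≥ 4 lam Di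
  have hlD : 0 ≤ lam * Di := by nlinarith
  have hc2 : 4 * (lam * Di) ≤ c ^ 2 := by
    have h1 : (2 * Real.sqrt (lam * Di)) ^ 2 = 4 * (lam * Di) := by
      rw [mul_pow, Real.sq_sqrt hlD]; ring
    have h2 : 0 ≤ 2 * Real.sqrt (lam * Di) := by positivity
    nlinarith
  have key : lam * D u * (1 - u) ≤ lam * Di := by
    have h1 : D u * (1 - u) ≤ Di := by nlinarith
    nlinarith
  rw [hμ]
  linarith [key, hc2]
end

section
/- Let λ > 0, D_i > 4D_g ≥ 0, and let α < β be the roots of D(U) = D_i(1-4U+3U²)+D_g(4U-3U²) in (0,1). Then for all u ∈ (α, 1), 3λ(D_i - D_g)(u-α)u(1-u) ≤ λ D_i, with strict inequality; hence c₂ := 2 sup_{u∈(α,1)} √(3λ(D_i-D_g)(u-α)u(1-u)) < 2√(λ D_i). -/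
theorem c2_lt_cstar (lam Di Dg : ℝ) (hlam : 0 < lam) (hDg : 0 ≤ Dg) (h : Di > 4 * Dg)
    (α β : ℝ)
    (hα : α = 2 / 3 - Real.sqrt (Di ^ 2 + 4 * Dg ^ 2 - 5 * Di * Dg) / (3 * (Di - Dg)))
    (hβ : β = 2 / 3 + Real.sqrt (Di ^ 2 + 4 * Dg ^ 2 - 5 * Di * Dg) / (3 * (Di - Dg))) :
    (∀ u ∈ Set.Ioo α 1, 3 * lam * (Di - Dg) * (u - α) * u * (1 - u) < lam * Di) ∧
    2 * sSup ((fun u => Real.sqrt (3 * lam * (Di - Dg) * (u - α) * u * (1 - u))) ''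
        Set.Ioo α 1) < 2 * Real.sqrt (lam * Di) := by
  have hd : 0 < Di - Dg := by nlinarith
  set s := Real.sqrt (Di ^ 2 + 4 * Dg ^ 2 - 5 * Di * Dg) with hsdef
  have hdisc : 0 ≤ Di ^ 2 + 4 * Dg ^ 2 - 5 * Di * Dg := by nlinarith
  have hs2 : s ^ 2 = Di ^ 2 + 4 * Dg ^ 2 - 5 * Di * Dg := Real.sq_sqrt hdisc
  have hs0 : 0 ≤ s := Real.sqrt_nonneg _
  have hslt : s < 3 * Di + Dg := by nlinarith
  have hα0 : 0 ≤ α := by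
    rw [hα, sub_nonneg, div_le_iff₀ (by linarith : (0:ℝ) < 3 * (Di - Dg))]
    nlinarith
  have hα23 : α ≤ 2 / 3 := by
    rw [hα]
    have : 0 ≤ s / (3 * (Di - Dg)) := by positivity
    linarith
  have h1α : 3 * (Di - Dg) * (1 - α) = (Di - Dg) + s := by
    rw [hα]; field_simp; ring
  -- uniform nonstrict bound
  have key : ∀ u ∈ Set.Ioo α 1,
      3 * lam * (Di - Dg) * (u - α) * u * (1 - u) ≤ lam * ((Di - Dg) + s) / 4 := by
    intro u hu
    obtain ⟨hu1, hu2⟩ := hu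
    have hu0 : 0 < u := lt_of_le_of_lt hα0 hu1
    have h1 : (u - α) * (u * (1 - u)) ≤ (1 - α) * (1 / 4) := by
      apply mul_le_mul (by linarith) (by nlinarith [sq_nonneg (2 * u - 1)])
        (by nlinarith) (by linarith)
    have h3l : (0:ℝ) ≤ 3 * lam * (Di - Dg) := by positivity
    have hM := mul_le_mul_of_nonneg_left h1 h3l
    nlinarith [hM, hlam.le, h1α]
  have hMlt : lam * ((Di - Dg) + s) / 4 < lam * Di := by nlinarith
  have hM0 : 0 ≤ lam * ((Di - Dg) + s) / 4 := by positivity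
  constructor
  · intro u hu
    exact lt_of_le_of_lt (key u hu) hMlt
  · have hsupb : sSup ((fun u => Real.sqrt (3 * lam * (Di - Dg) * (u - α) * u * (1 - u))) ''
        Set.Ioo α 1) ≤ Real.sqrt (lam * ((Di - Dg) + s) / 4) := by
      apply Real.sSup_le _ (Real.sqrt_nonneg _)
      rintro x ⟨u, hu, rfl⟩
      exact Real.sqrt_le_sqrt (key u hu)
    have hlt : Real.sqrt (lam * ((Di - Dg) + s) / 4) < Real.sqrt (lam * Di) :=
      Real.sqrt_lt_sqrt hM0 hMlt
    linarith
end

section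
/- Let λ > 0, D_i > 4D_g ≥ 0, c ≥ 2√(λ D_i), and μ₂ = -c/2. Then for all u ∈ (α, 1), μ₂(μ₂ + c) ≤ -3λ(D_i - D_g)(u-α)u(1-u). -/
theorem invariant_region_slope_two (lam Di Dg c : ℝ) (hlam : 0 < lam)
    (hDg : 0 ≤ Dg) (h : Di > 4 * Dg) (hc : c ≥ 2 * Real.sqrt (lam * Di))
    (α : ℝ)
    (hα : α = 2 / 3 - Real.sqrt (Di ^ 2 + 4 * Dg ^ 2 - 5 * Di * Dg) / (3 * (Di - Dg)))
    (μ₂ : ℝ) (hμ : μ₂ = -c / 2) :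
    ∀ u ∈ Set.Ioo α 1, μ₂ * (μ₂ + c) ≤ -(3 * lam * (Di - Dg) * (u - α) * u * (1 - u)) := by
  intro u hu
  obtain ⟨hu1, hu2⟩ := hu
  have hDi : 0 < Di := by nlinarith
  have hdiff : 0 < Di - Dg := by nlinarith
  -- α ≥ 0
  have hsqle : Real.sqrt (Di ^ 2 + 4 * Dg ^ 2 - 5 * Di * Dg) ≤ 2 * (Di - Dg) := by
    rw [show (2 : ℝ) * (Di - Dg) = Real.sqrt ((2 * (Di - Dg)) ^ 2) by
      rw [Real.sqrt_sq (by positivity)]]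
    apply Real.sqrt_le_sqrt
    nlinarith
  have hα0 : 0 ≤ α := by
    rw [hα]
    rw [sub_nonneg, div_le_iff₀ (by positivity)]
    linarith
  -- c² ≥ 4 λ Di
  have hs : Real.sqrt (lam * Di) ^ 2 = lam * Di := Real.sq_sqrt (by positivity)
  have hsn : 0 ≤ Real.sqrt (lam * Di) := Real.sqrt_nonneg _
  have hc2 : c ^ 2 ≥ 4 * (lam * Di) := by nlinarith
  rw [hμ]
  have h1 : 0 < u - α := by linarith
  have h2 : 0 < u := by linarith
  have h3 : 0 < 1 - u := by linarith
  have haux : (u - α) * (u * (1 - u)) ≤ 1 / 4 := by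
    have h4 : (u - α) * (u * (1 - u)) ≤ 1 * (u * (1 - u)) :=
      mul_le_mul_of_nonneg_right (by linarith) (le_of_lt (mul_pos h2 h3))
    nlinarith [sq_nonneg (2 * u - 1)]
  nlinarith [mul_le_mul_of_nonneg_left haux (le_of_lt (mul_pos hlam hdiff)),
    mul_pos hlam hDi, mul_pos hlam hdiff]
end
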